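/- arXiv:2405.17123 — 5 statements merged into one kernel-verified Lean document; each statement's English description precedes it below -/
import Mathlib

section
/- Let H be a complex separable Hilbert space and let A : ℝ → B(H) be a continuous (in the strong operator topology) family of bounded self-adjoint operators with ∫_ℝ ‖A(y)‖ dy < ∞. If U(x₁,x₂) denotes the unitary evolution system of u'(x) = i A(x) u(x), then for every φ ∈ H and all x₁ ≤ x₂ one has ‖U(x₁,x₂)φ − φ‖ ≤ (∫_{x₂}^{x₁} ‖A(w)‖ dw) ‖φ‖; consequently the strong limits U(x,−∞) := lim_{n→∞} U(x,−n), U(+∞,x) := lim_{n→∞} U(n,x) and U(+∞,−∞) := lim_{n→∞} U(n,−n) exist in the strong operator topology. -/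
open MeasureTheory Filter Topology

/-- For an SOT-continuous, self-adjoint valued, L¹ (in operator norm) family
`A : ℝ → B(H)` with unitary evolution system `U`, one has the estimate
`‖U x₁ x₂ φ - φ‖ ≤ (∫_{x₁}^{x₂} ‖A w‖ dw) ‖φ‖` for `x₁ ≤ x₂`, and consequently the strong
limits `U(x,−∞)`, `U(+∞,x)` and `U(+∞,−∞)` exist in the strong operator topology. -/
theorem stmt0
    {H : Type*} [NormedAddCommGroup H] [InnerProductSpace ℂ H] [CompleteSpace H]
    [TopologicalSpace.SeparableSpace H]
    (A : ℝ → H →L[ℂ] H)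
    (hAcont : ∀ φ : H, Continuous fun y => A y φ)
    (hAsa : ∀ y, IsSelfAdjoint (A y))
    (hAint : Integrable fun y => ‖A y‖)
    (U : ℝ → ℝ → H →L[ℂ] H)
    (hUder : ∀ (x₂ : ℝ) (φ : H) (x₁ : ℝ),
      HasDerivAt (fun x => U x x₂ φ) (Complex.I • A x₁ (U x₁ x₂ φ)) x₁)
    (hUcoc : ∀ x₁ x₂ x₃ : ℝ, (U x₁ x₂).comp (U x₂ x₃) = U x₁ x₃)
    (hUone : ∀ x : ℝ, U x x = 1)
    (hUunitary : ∀ (x₁ x₂ : ℝ) (φ : H), ‖U x₁ x₂ φ‖ = ‖φ‖) :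
    (∀ (φ : H) (x₁ x₂ : ℝ), x₁ ≤ x₂ →
      ‖U x₁ x₂ φ - φ‖ ≤ (∫ w in x₁..x₂, ‖A w‖) * ‖φ‖) ∧
    (∀ (x : ℝ) (φ : H), ∃ L : H, Tendsto (fun n : ℕ => U x (-(n : ℝ)) φ) atTop (𝓝 L)) ∧
    (∀ (x : ℝ) (φ : H), ∃ L : H, Tendsto (fun n : ℕ => U (n : ℝ) x φ) atTop (𝓝 L)) ∧
    (∀ φ : H, ∃ L : H, Tendsto (fun n : ℕ => U (n : ℝ) (-(n : ℝ)) φ) atTop (𝓝 L)) := by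
  -- local uniform boundedness of ‖A‖ via Banach–Steinhaus
  have hbdd : ∀ x₀ : ℝ, ∃ C : ℝ, 0 ≤ C ∧ ∀ y ∈ Set.Icc (x₀ - 1) (x₀ + 1), ‖A y‖ ≤ C := by
    intro x₀
    obtain ⟨C, hC⟩ := banach_steinhaus (g := fun y : Set.Icc (x₀ - 1) (x₀ + 1) => A y)
      (fun ψ => by
        obtain ⟨C, hC⟩ := isCompact_Icc.exists_bound_of_continuousOn
          ((hAcont ψ).continuousOn (s := Set.Icc (x₀ - 1) (x₀ + 1)))
        exact ⟨C, fun y => hC y y.2⟩)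
    exact ⟨max C 0, le_max_right _ _, fun y hy => le_trans (hC ⟨y, hy⟩) (le_max_left _ _)⟩
  -- continuity of x ↦ A x (U x x₂ φ)
  have hcont : ∀ (x₂ : ℝ) (φ : H), Continuous fun x => A x (U x x₂ φ) := by
    intro x₂ φ
    have hgc : Continuous fun x => U x x₂ φ :=
      continuous_iff_continuousAt.2 fun x => (hUder x₂ φ x).continuousAt
    set g : ℝ → H := fun x => U x x₂ φ with hg
    rw [continuous_iff_continuousAt]
    intro x₀
    obtain ⟨C, hC0, hC⟩ := hbdd x₀
    rw [ContinuousAt, ← tendsto_sub_nhds_zero_iff]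
    apply squeeze_zero_norm'
      (a := fun x => C * ‖g x - g x₀‖ + ‖A x (g x₀) - A x₀ (g x₀)‖)
    · have hmem : Set.Icc (x₀ - 1) (x₀ + 1) ∈ 𝓝 x₀ :=
        Icc_mem_nhds (by linarith) (by linarith)
      filter_upwards [hmem] with x hx
      have hsplit : A x (g x) - A x₀ (g x₀)
          = A x (g x - g x₀) + (A x (g x₀) - A x₀ (g x₀)) := by
        rw [map_sub]; abel
      rw [hsplit]
      refine (norm_add_le _ _).trans (add_le_add ?_ le_rfl)
      exact le_trans ((A x).le_opNorm _)
        (mul_le_mul_of_nonneg_right (hC x hx) (norm_nonneg _))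
    · have h1 : Tendsto (fun x => C * ‖g x - g x₀‖) (𝓝 x₀) (𝓝 (C * ‖g x₀ - g x₀‖)) :=
        (tendsto_const_nhds.mul ((hgc.sub continuous_const).norm.tendsto x₀))
      have h2 : Tendsto (fun x => ‖A x (g x₀) - A x₀ (g x₀)‖) (𝓝 x₀)
          (𝓝 ‖A x₀ (g x₀) - A x₀ (g x₀)‖) :=
        (((hAcont (g x₀)).sub continuous_const).norm.tendsto x₀)
      simpa using h1.add h2
  -- the key estimate
  have key : ∀ (φ : H) (x₁ x₂ : ℝ), x₁ ≤ x₂ →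
      ‖U x₁ x₂ φ - φ‖ ≤ (∫ w in x₁..x₂, ‖A w‖) * ‖φ‖ := by
    intro φ x₁ x₂ h12
    have hcf : Continuous fun w => Complex.I • A w (U w x₂ φ) :=
      (hcont x₂ φ).const_smul _
    have hftc : ∫ w in x₁..x₂, Complex.I • A w (U w x₂ φ) = U x₂ x₂ φ - U x₁ x₂ φ :=
      intervalIntegral.integral_eq_sub_of_hasDerivAt (fun t _ => hUder x₂ φ t)
        (hcf.intervalIntegrable _ _)
    have hval : U x₁ x₂ φ - φ = -(∫ w in x₁..x₂, Complex.I • A w (U w x₂ φ)) := by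
      rw [hftc, hUone x₂]; simp
    rw [hval, norm_neg]
    calc ‖∫ w in x₁..x₂, Complex.I • A w (U w x₂ φ)‖
        ≤ ∫ w in x₁..x₂, ‖Complex.I • A w (U w x₂ φ)‖ :=
          intervalIntegral.norm_integral_le_integral_norm h12
      _ ≤ ∫ w in x₁..x₂, ‖A w‖ * ‖φ‖ := by
          apply intervalIntegral.integral_mono_on h12
            (hcf.norm.intervalIntegrable _ _)
            (hAint.intervalIntegrable.mul_const _)
          intro w _
          rw [norm_smul, Complex.norm_I, one_mul]
          calc ‖A w (U w x₂ φ)‖ ≤ ‖A w‖ * ‖U w x₂ φ‖ := (A w).le_opNorm _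
            _ = ‖A w‖ * ‖φ‖ := by rw [hUunitary]
      _ = (∫ w in x₁..x₂, ‖A w‖) * ‖φ‖ := intervalIntegral.integral_mul_const _ _
  -- reversed estimate
  have key' : ∀ (φ : H) (x₁ x₂ : ℝ), x₁ ≤ x₂ →
      ‖U x₂ x₁ φ - φ‖ ≤ (∫ w in x₁..x₂, ‖A w‖) * ‖φ‖ := by
    intro φ x₁ x₂ h12
    have hinv : U x₁ x₂ (U x₂ x₁ φ) = φ := by
      have hc := hUcoc x₁ x₂ x₁
      rw [hUone x₁] at hc
      calc U x₁ x₂ (U x₂ x₁ φ) = ((U x₁ x₂).comp (U x₂ x₁)) φ := rfl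
        _ = (1 : H →L[ℂ] H) φ := by rw [hc]
        _ = φ := rfl
    have h := key (U x₂ x₁ φ) x₁ x₂ h12
    rw [hinv, hUunitary] at h
    rw [← norm_neg, neg_sub]
    exact h
  -- monotonicity of tail integrals
  have hAnn : 0 ≤ᵐ[(volume : Measure ℝ)] fun y => ‖A y‖ :=
    Eventually.of_forall fun y => norm_nonneg _
  have hmono : ∀ (x₁ x₂ : ℝ) (s : Set ℝ), x₁ ≤ x₂ → Set.Ioc x₁ x₂ ⊆ s →
      (∫ w in x₁..x₂, ‖A w‖) ≤ ∫ w in s, ‖A w‖ := by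
    intro x₁ x₂ s h12 hsub
    rw [intervalIntegral.integral_of_le h12]
    exact setIntegral_mono_set hAint.integrableOn (ae_restrict_of_ae hAnn)
      (HasSubset.Subset.eventuallyLE hsub)
  -- tails of the integral tend to zero
  have tail_Iic : Tendsto (fun N : ℕ => ∫ w in Set.Iic (-(N : ℝ)), ‖A w‖) atTop (𝓝 0) := by
    have hint : ⋂ N : ℕ, Set.Iic (-(N : ℝ)) = (∅ : Set ℝ) := by
      ext x
      simp only [Set.mem_iInter, Set.mem_Iic, Set.mem_empty_iff_false, iff_false, not_forall,
        not_le]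
      obtain ⟨n, hn⟩ := exists_nat_gt (-x)
      exact ⟨n, by linarith⟩
    have h := tendsto_setIntegral_of_antitone (μ := (volume : Measure ℝ))
      (f := fun w => ‖A w‖) (s := fun N : ℕ => Set.Iic (-(N : ℝ)))
      (fun N => measurableSet_Iic)
      (fun m n hmn => Set.Iic_subset_Iic.2 (neg_le_neg (Nat.cast_le.2 hmn)))
      ⟨0, hAint.integrableOn⟩
    rw [hint] at h
    simpa using h
  have tail_Ici : Tendsto (fun N : ℕ => ∫ w in Set.Ici (N : ℝ), ‖A w‖) atTop (𝓝 0) := by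
    have hint : ⋂ N : ℕ, Set.Ici (N : ℝ) = (∅ : Set ℝ) := by
      ext x
      simp only [Set.mem_iInter, Set.mem_Ici, Set.mem_empty_iff_false, iff_false, not_forall,
        not_le]
      exact exists_nat_gt x
    have h := tendsto_setIntegral_of_antitone (μ := (volume : Measure ℝ))
      (f := fun w => ‖A w‖) (s := fun N : ℕ => Set.Ici (N : ℝ))
      (fun N => measurableSet_Ici)
      (fun m n hmn => Set.Ici_subset_Ici.2 (Nat.cast_le.2 hmn))
      ⟨0, hAint.integrableOn⟩
    rw [hint] at h
    simpa using h
  -- bound for the "left" increments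
  have bnd_left : ∀ (φ : H) (x : ℝ) (n m N : ℕ), N ≤ n → N ≤ m → m ≤ n →
      ‖U x (-(n : ℝ)) φ - U x (-(m : ℝ)) φ‖ ≤ (∫ w in Set.Iic (-(N : ℝ)), ‖A w‖) * ‖φ‖ := by
    intro φ x n m N _ hm hmn
    have hcomp : U x (-(n : ℝ)) φ = U x (-(m : ℝ)) (U (-(m : ℝ)) (-(n : ℝ)) φ) := by
      rw [← hUcoc x (-(m : ℝ)) (-(n : ℝ))]; rfl
    have hdiff : U x (-(n : ℝ)) φ - U x (-(m : ℝ)) φ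
        = U x (-(m : ℝ)) (U (-(m : ℝ)) (-(n : ℝ)) φ - φ) := by
      rw [map_sub, ← hcomp]
    rw [hdiff, hUunitary]
    calc ‖U (-(m : ℝ)) (-(n : ℝ)) φ - φ‖
        ≤ (∫ w in (-(n : ℝ))..(-(m : ℝ)), ‖A w‖) * ‖φ‖ :=
          key' φ (-(n : ℝ)) (-(m : ℝ)) (neg_le_neg (Nat.cast_le.2 hmn))
      _ ≤ (∫ w in Set.Iic (-(N : ℝ)), ‖A w‖) * ‖φ‖ := by
          refine mul_le_mul_of_nonneg_right
            (hmono _ _ _ (neg_le_neg (Nat.cast_le.2 hmn)) fun w hw => ?_) (norm_nonneg _)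
          exact le_trans hw.2 (neg_le_neg (Nat.cast_le.2 hm))
  -- bound for the "right" increments
  have bnd_right : ∀ (φ : H) (x : ℝ) (n m N : ℕ), N ≤ n → N ≤ m → m ≤ n →
      ‖U (n : ℝ) x φ - U (m : ℝ) x φ‖ ≤ (∫ w in Set.Ici (N : ℝ), ‖A w‖) * ‖φ‖ := by
    intro φ x n m N _ hm hmn
    have hcomp : U (n : ℝ) x φ = U (n : ℝ) (m : ℝ) (U (m : ℝ) x φ) := by
      rw [← hUcoc (n : ℝ) (m : ℝ) x]; rfl
    rw [hcomp]
    calc ‖U (n : ℝ) (m : ℝ) (U (m : ℝ) x φ) - U (m : ℝ) x φ‖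
        ≤ (∫ w in (m : ℝ)..(n : ℝ), ‖A w‖) * ‖U (m : ℝ) x φ‖ :=
          key' _ (m : ℝ) (n : ℝ) (Nat.cast_le.2 hmn)
      _ ≤ (∫ w in Set.Ici (N : ℝ), ‖A w‖) * ‖φ‖ := by
          rw [hUunitary]
          refine mul_le_mul_of_nonneg_right
            (hmono _ _ _ (Nat.cast_le.2 hmn) fun w hw => ?_) (norm_nonneg _)
          exact le_trans (Nat.cast_le.2 hm) (le_of_lt hw.1)
  refine ⟨key, ?_, ?_, ?_⟩
  · intro x φ
    refine cauchySeq_tendsto_of_complete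
      (cauchySeq_of_le_tendsto_0 (fun N : ℕ => (∫ w in Set.Iic (-(N : ℝ)), ‖A w‖) * ‖φ‖)
        ?_ (by simpa using tail_Iic.mul_const ‖φ‖))
    intro n m N hn hm
    rcases le_total m n with hmn | hmn
    · rw [dist_eq_norm]; exact bnd_left φ x n m N hn hm hmn
    · rw [dist_comm, dist_eq_norm]; exact bnd_left φ x m n N hm hn hmn
  · intro x φ
    refine cauchySeq_tendsto_of_complete
      (cauchySeq_of_le_tendsto_0 (fun N : ℕ => (∫ w in Set.Ici (N : ℝ), ‖A w‖) * ‖φ‖)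
        ?_ (by simpa using tail_Ici.mul_const ‖φ‖))
    intro n m N hn hm
    rcases le_total m n with hmn | hmn
    · rw [dist_eq_norm]; exact bnd_right φ x n m N hn hm hmn
    · rw [dist_comm, dist_eq_norm]; exact bnd_right φ x m n N hm hn hmn
  · intro φ
    have hkey : ∀ n m N : ℕ, N ≤ n → N ≤ m → m ≤ n →
        ‖U (n : ℝ) (-(n : ℝ)) φ - U (m : ℝ) (-(m : ℝ)) φ‖
          ≤ ((∫ w in Set.Iic (-(N : ℝ)), ‖A w‖) + ∫ w in Set.Ici (N : ℝ), ‖A w‖) * ‖φ‖ := by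
      intro n m N hn hm hmn
      have h1 : ‖U (n : ℝ) (-(n : ℝ)) φ - U (n : ℝ) (-(m : ℝ)) φ‖
          ≤ (∫ w in Set.Iic (-(N : ℝ)), ‖A w‖) * ‖φ‖ :=
        bnd_left φ (n : ℝ) n m N hn hm hmn
      have h2 : ‖U (n : ℝ) (-(m : ℝ)) φ - U (m : ℝ) (-(m : ℝ)) φ‖
          ≤ (∫ w in Set.Ici (N : ℝ), ‖A w‖) * ‖φ‖ :=
        bnd_right φ (-(m : ℝ)) n m N hn hm hmn
      calc ‖U (n : ℝ) (-(n : ℝ)) φ - U (m : ℝ) (-(m : ℝ)) φ‖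
          ≤ ‖U (n : ℝ) (-(n : ℝ)) φ - U (n : ℝ) (-(m : ℝ)) φ‖
            + ‖U (n : ℝ) (-(m : ℝ)) φ - U (m : ℝ) (-(m : ℝ)) φ‖ :=
            norm_sub_le_norm_sub_add_norm_sub _ _ _
        _ ≤ ((∫ w in Set.Iic (-(N : ℝ)), ‖A w‖) + ∫ w in Set.Ici (N : ℝ), ‖A w‖) * ‖φ‖ := by
            rw [add_mul]; exact add_le_add h1 h2
    refine cauchySeq_tendsto_of_complete
      (cauchySeq_of_le_tendsto_0
        (fun N : ℕ => ((∫ w in Set.Iic (-(N : ℝ)), ‖A w‖) + ∫ w in Set.Ici (N : ℝ), ‖A w‖) * ‖φ‖)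
        ?_ (by simpa using (tail_Iic.add tail_Ici).mul_const ‖φ‖))
    intro n m N hn hm
    rcases le_total m n with hmn | hmn
    · rw [dist_eq_norm]; exact hkey n m N hn hm hmn
    · rw [dist_comm, dist_eq_norm]; exact hkey m n N hm hn hmn
end

section
/- Let A : ℝ → B(H) be SOT-continuous, self-adjoint valued, and L¹ in operator norm, with unitary evolution system U. Then the strongly extended operators satisfy the cocycle identity U(x₁,x₃) = U(x₁,x₂)U(x₂,x₃) for all x₁,x₂,x₃ ∈ ℝ ∪ {±∞}, and for x ∈ ℝ the map x ↦ U(x,−∞) is SOT-differentiable with derivative ∂_x U(x,−∞) = i A(x) U(x,−∞). -/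
open MeasureTheory Filter Topology

/-- For an SOT-continuous, self-adjoint valued, L¹ family `A : ℝ → B(H)` with
unitary evolution system `U`, the strongly extended operators `U(x,−∞)`, `U(+∞,x)`,
`U(+∞,−∞)` satisfy the cocycle identity for all arguments in `ℝ ∪ {±∞}`, and
`x ↦ U(x,−∞)` is SOT-differentiable with `∂ₓ U(x,−∞) = i A(x) U(x,−∞)`. -/
theorem stmt1
    {H : Type*} [NormedAddCommGroup H] [InnerProductSpace ℂ H] [CompleteSpace H]
    [TopologicalSpace.SeparableSpace H]
    (A : ℝ → H →L[ℂ] H)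
    (hAcont : ∀ φ : H, Continuous fun y => A y φ)
    (hAsa : ∀ y, IsSelfAdjoint (A y))
    (hAint : Integrable fun y => ‖A y‖)
    (U : ℝ → ℝ → H →L[ℂ] H)
    (hUder : ∀ (x₂ : ℝ) (φ : H) (x₁ : ℝ),
      HasDerivAt (fun x => U x x₂ φ) (Complex.I • A x₁ (U x₁ x₂ φ)) x₁)
    (hUcoc : ∀ x₁ x₂ x₃ : ℝ, (U x₁ x₂).comp (U x₂ x₃) = U x₁ x₃)
    (hUone : ∀ x : ℝ, U x x = 1)
    (hUunitary : ∀ (x₁ x₂ : ℝ) (φ : H), ‖U x₁ x₂ φ‖ = ‖φ‖)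
    -- the strongly extended operators
    (Uminus : ℝ → H →L[ℂ] H) (Uplus : ℝ → H →L[ℂ] H) (Uinf : H →L[ℂ] H)
    (hUminus : ∀ (x : ℝ) (φ : H),
      Tendsto (fun n : ℕ => U x (-(n : ℝ)) φ) atTop (𝓝 (Uminus x φ)))
    (hUplus : ∀ (x : ℝ) (φ : H),
      Tendsto (fun n : ℕ => U (n : ℝ) x φ) atTop (𝓝 (Uplus x φ)))
    (hUinf : ∀ φ : H,
      Tendsto (fun n : ℕ => U (n : ℝ) (-(n : ℝ)) φ) atTop (𝓝 (Uinf φ))) :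
    -- extended cocycle identities
    (∀ x₁ x₂ : ℝ, Uminus x₁ = (U x₁ x₂).comp (Uminus x₂)) ∧
    (∀ x₁ x₂ : ℝ, Uplus x₂ = (Uplus x₁).comp (U x₁ x₂)) ∧
    (∀ x : ℝ, Uinf = (Uplus x).comp (Uminus x)) ∧
    -- SOT-differentiability of `x ↦ U(x,−∞)` with derivative `i A(x) U(x,−∞)`
    (∀ (φ : H) (x : ℝ),
      HasDerivAt (fun x' => Uminus x' φ) (Complex.I • A x (Uminus x φ)) x) := by

  have key : ∀ (x₁ x₂ y : ℝ) (φ : H), U x₁ x₂ (U x₂ y φ) = U x₁ y φ := by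
    intro x₁ x₂ y φ
    rw [← hUcoc x₁ x₂ y]; rfl
  have h1 : ∀ x₁ x₂ : ℝ, Uminus x₁ = (U x₁ x₂).comp (Uminus x₂) := by
    intro x₁ x₂
    ext φ
    have h := ((U x₁ x₂).continuous.tendsto (Uminus x₂ φ)).comp (hUminus x₂ φ)
    simp only [Function.comp_def, key] at h
    simpa using tendsto_nhds_unique (hUminus x₁ φ) h
  refine ⟨h1, ?_, ?_, ?_⟩
  · intro x₁ x₂
    ext φ
    have h := hUplus x₁ (U x₁ x₂ φ)
    simp only [key] at h
    simpa using tendsto_nhds_unique (hUplus x₂ φ) h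
  · intro x
    ext φ
    refine tendsto_nhds_unique (hUinf φ) ?_
    simp only [ContinuousLinearMap.coe_comp', Function.comp_apply]
    set ψ := Uminus x φ with hψ
    rw [tendsto_iff_norm_sub_tendsto_zero]
    have t1 : Tendsto (fun n : ℕ => ‖U x (-(n:ℝ)) φ - ψ‖) atTop (𝓝 0) := by
      rw [← tendsto_iff_norm_sub_tendsto_zero]
      exact hUminus x φ
    have t2 : Tendsto (fun n : ℕ => ‖U (n:ℝ) x ψ - Uplus x ψ‖) atTop (𝓝 0) := by
      rw [← tendsto_iff_norm_sub_tendsto_zero]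
      exact hUplus x ψ
    have hb : ∀ n : ℕ, ‖U (n:ℝ) (-(n:ℝ)) φ - Uplus x ψ‖ ≤
        ‖U x (-(n:ℝ)) φ - ψ‖ + ‖U (n:ℝ) x ψ - Uplus x ψ‖ := by
      intro n
      have e1 : U (n:ℝ) (-(n:ℝ)) φ - Uplus x ψ =
          (U (n:ℝ) x (U x (-(n:ℝ)) φ - ψ)) + (U (n:ℝ) x ψ - Uplus x ψ) := by
        rw [map_sub, ← key (n:ℝ) x (-(n:ℝ)) φ]
        abel
      rw [e1]
      calc _ ≤ ‖U (n:ℝ) x (U x (-(n:ℝ)) φ - ψ)‖ + ‖U (n:ℝ) x ψ - Uplus x ψ‖ :=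
            norm_add_le _ _
        _ = _ := by rw [hUunitary]
    have := squeeze_zero (fun n => norm_nonneg _) hb (by simpa using t1.add t2)
    exact this
  · intro φ x
    have h := hUder x (Uminus x φ) x
    have hfun : (fun x' => Uminus x' φ) = fun x' => U x' x (Uminus x φ) := by
      funext x'
      rw [h1 x' x]; rfl
    rw [hfun]
    have e : U x x (Uminus x φ) = Uminus x φ := by rw [hUone]; rfl
    rwa [e] at h
end

section
/- Let H_t^V(x,y) = q_t(x−y)U^V(x,y) with q_t the 1-d heat kernel and U^V the evolution system of an SOT-differentiable V : ℝ → B(H). Then (i∂_x + V(x))² H_t^V(x,y) = −q_t''(x−y) U^V(x,y), where ∂_x H_t^V(x,y) = −((x−y)/(2t)) H_t^V(x,y) + iV(x)H_t^V(x,y). -/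
open MeasureTheory Filter Topology

/-- the one-dimensional heat kernel `q_t(z) = (4πt)^{-1/2} e^{-z²/(4t)}` -/
noncomputable def heatKer (t z : ℝ) : ℝ :=
  (4 * Real.pi * t) ^ (-(1:ℝ)/2) * Real.exp (-z ^ 2 / (4 * t))

lemma heatKer_hasDerivAt (t : ℝ) (ht : 0 < t) (z : ℝ) :
    HasDerivAt (heatKer t) ((-(z / (2 * t))) * heatKer t z) z := by
  have h1 : HasDerivAt (fun z : ℝ => -z ^ 2 / (4 * t)) (-(z / (2 * t))) z := by
    have := ((hasDerivAt_pow 2 z).neg.div_const (4 * t))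
    refine this.congr_deriv ?_
    field_simp
    ring
  have := (h1.exp).const_mul ((4 * Real.pi * t) ^ (-(1:ℝ)/2))
  refine this.congr_deriv ?_
  unfold heatKer
  ring

lemma heatKer_deriv2 (t : ℝ) (ht : 0 < t) (z : ℝ) :
    deriv (deriv (heatKer t)) z = (z ^ 2 / (4 * t ^ 2) - 1 / (2 * t)) * heatKer t z := by
  have hd : deriv (heatKer t) = fun z => (-(z / (2 * t))) * heatKer t z :=
    funext fun z => (heatKer_hasDerivAt t ht z).deriv
  rw [hd]
  have h2 : HasDerivAt (fun z => (-(z / (2 * t))) * heatKer t z)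
      ((z ^ 2 / (4 * t ^ 2) - 1 / (2 * t)) * heatKer t z) z := by
    have hc : HasDerivAt (fun z : ℝ => -(z / (2 * t))) (-(1 / (2 * t))) z :=
      ((hasDerivAt_id z).div_const (2 * t)).neg
    have := hc.mul (heatKer_hasDerivAt t ht z)
    refine this.congr_deriv ?_
    field_simp
    ring
  exact h2.deriv


/-- For `H_t^V(x,y) = q_t(x−y)U^V(x,y)` one has
`∂_x H_t^V(x,y) = −((x−y)/(2t)) H_t^V(x,y) + iV(x)H_t^V(x,y)` and
`(i∂_x + V(x))² H_t^V(x,y) = −q_t''(x−y) U^V(x,y)`. -/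
theorem stmt5
    {H : Type*} [NormedAddCommGroup H] [InnerProductSpace ℂ H] [CompleteSpace H]
    [TopologicalSpace.SeparableSpace H]
    (V : ℝ → H →L[ℂ] H) (Vd : ℝ → H →L[ℂ] H)
    (hVd : ∀ (x : ℝ) (φ : H), HasDerivAt (fun x' => V x' φ) (Vd x φ) x)
    (U : ℝ → ℝ → H →L[ℂ] H)
    (hUder : ∀ (y : ℝ) (φ : H) (x : ℝ),
      HasDerivAt (fun x' => U x' y φ) (Complex.I • V x (U x y φ)) x)
    (hUone : ∀ x : ℝ, U x x = 1)
    (hUnorm : ∀ x y : ℝ, ‖U x y‖ = 1)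
    (t : ℝ) (ht : 0 < t) (y : ℝ) (φ : H) :
    -- `∂_x H_t^V(x,y) = −((x−y)/(2t)) H_t^V(x,y) + iV(x)H_t^V(x,y)`
    (∀ x : ℝ, HasDerivAt (fun x' => heatKer t (x' - y) • U x' y φ)
      ((-((x - y) / (2 * t))) • (heatKer t (x - y) • U x y φ)
        + Complex.I • V x (heatKer t (x - y) • U x y φ)) x) ∧
    -- `(i∂_x + V(x))² H_t^V(x,y) = −q_t''(x−y) U^V(x,y)`
    (∃ g' : ℝ → H,
      (∀ x : ℝ, HasDerivAt
        (fun x' => Complex.I • ((-((x' - y) / (2 * t))) • (heatKer t (x' - y) • U x' y φ)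
            + Complex.I • V x' (heatKer t (x' - y) • U x' y φ))
          + V x' (heatKer t (x' - y) • U x' y φ)) (g' x) x) ∧
      (∀ x : ℝ, Complex.I • g' x
          + V x (Complex.I • ((-((x - y) / (2 * t))) • (heatKer t (x - y) • U x y φ)
              + Complex.I • V x (heatKer t (x - y) • U x y φ))
            + V x (heatKer t (x - y) • U x y φ))
        = -((deriv (deriv (heatKer t)) (x - y)) • U x y φ))) := by
  have hc : ∀ x : ℝ, HasDerivAt (fun x' : ℝ => -((x' - y) / (2 * t))) (-(1 / (2 * t))) x :=
    fun x => (((hasDerivAt_id x).sub_const y).div_const (2 * t)).neg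
  have hqx : ∀ x : ℝ, HasDerivAt (fun x' => heatKer t (x' - y))
      ((-((x - y) / (2 * t))) * heatKer t (x - y)) x := by
    intro x
    have := (heatKer_hasDerivAt t ht (x - y)).comp x ((hasDerivAt_id x).sub_const y)
    exact this.congr_deriv (by simp)
  have hH : ∀ x : ℝ, HasDerivAt (fun x' => heatKer t (x' - y) • U x' y φ)
      ((-((x - y) / (2 * t))) • (heatKer t (x - y) • U x y φ)
        + Complex.I • V x (heatKer t (x - y) • U x y φ)) x := by
    intro x
    have := (hqx x).smul (hUder y φ x)
    refine this.congr_deriv ?_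
    rw [ContinuousLinearMap.map_smul_of_tower]
    module
  refine ⟨hH, ?_⟩
  refine ⟨fun x => Complex.I • ((-((x - y) / (2 * t))) • ((-((x - y) / (2 * t))) • (heatKer t (x - y) • U x y φ)
        + Complex.I • V x (heatKer t (x - y) • U x y φ))
      + (-(1 / (2 * t))) • (heatKer t (x - y) • U x y φ)), ?_, ?_⟩
  · intro x
    have hG : HasDerivAt (fun x' => Complex.I •
        ((-((x' - y) / (2 * t))) • (heatKer t (x' - y) • U x' y φ)))
        (Complex.I • ((-((x - y) / (2 * t))) • ((-((x - y) / (2 * t))) • (heatKer t (x - y) • U x y φ)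
            + Complex.I • V x (heatKer t (x - y) • U x y φ))
          + (-(1 / (2 * t))) • (heatKer t (x - y) • U x y φ))) x :=
      ((hc x).smul (hH x)).const_smul Complex.I
    refine hG.congr_of_eventuallyEq (Filter.Eventually.of_forall fun x' => ?_)
    simp only [smul_add, smul_smul, Complex.I_mul_I, neg_one_smul]
    abel
  · intro x
    rw [heatKer_deriv2 t ht]
    simp only [map_add, _root_.map_smul, ContinuousLinearMap.map_smul_of_tower]
    match_scalars <;>
      (push_cast; ring_nf;
       try simp only [show Complex.I ^ 3 = -Complex.I by
         simp [pow_succ, Complex.I_mul_I], Complex.I_sq];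
       try ring)
end

section
/- Let (σ^j)_{j=1}^d be Clifford matrices of rank r' and F : ℝ^d → ℝ^d smooth, ω = iΣ_j σ^j F_j, dω = iΣ_j σ^j dF_j. Then the trace of the d-fold exterior power satisfies tr(dω^{∧d}) = i^d d! κ_σ det(DF) dx¹∧…∧dx^d, where κ_σ := tr(σ¹·…·σ^d) and DF is the Jacobian matrix of F. -/
open MeasureTheory

section Anticommuting

variable {M : Type*} [Ring M]

def AC {n : ℕ} (v : Fin n → M) : Prop := ∀ a b, a ≠ b → v a * v b = -(v b * v a)

lemma AC.comp {n : ℕ} {v : Fin n → M} (hv : AC v) (e : Equiv.Perm (Fin n)) :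
    AC (v ∘ e) := fun a b hab => hv _ _ (fun h => hab (e.injective h))

lemma AC.succ {n : ℕ} {v : Fin (n+1) → M} (hv : AC v) : AC (v ∘ Fin.succ) :=
  fun a b hab => hv _ _ (fun h => hab (Fin.succ_injective _ h))

lemma prod_ofFn_comp_swap : ∀ (n : ℕ) (v : Fin n → M)
    (hv : AC v) (x y : Fin n), x ≠ y →
    (List.ofFn (v ∘ Equiv.swap x y)).prod = -(List.ofFn v).prod := by
  intro n
  induction n with
  | zero => exact fun v hv x => x.elim0
  | succ m ih =>
    match m with
    | 0 =>
      intro v hv x y hxy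
      have hx := x.isLt; have hy := y.isLt
      exact absurd (Fin.ext (by omega)) hxy
    | Nat.succ k =>
      have h10 : (1 : Fin (k+2)) ≠ 0 := by
        rw [← Fin.succ_zero_eq_one]; exact Fin.succ_ne_zero _
      -- adjacent transposition (0 1)
      have adj : ∀ (w : Fin (k+2) → M), AC w →
          (List.ofFn (w ∘ Equiv.swap 0 1)).prod = -(List.ofFn w).prod := by
        intro w hw
        have hswap01 : ∀ i : Fin k, Equiv.swap (0 : Fin (k+2)) 1 i.succ.succ = i.succ.succ := by
          intro i
          refine Equiv.swap_apply_of_ne_of_ne (Fin.succ_ne_zero _) ?_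
          rw [← Fin.succ_zero_eq_one]
          exact fun h => Fin.succ_ne_zero i (Fin.succ_injective _ h)
        have e1 : List.ofFn w = w 0 :: w 1 :: List.ofFn (fun i : Fin k => w i.succ.succ) := by
          rw [List.ofFn_succ, List.ofFn_succ]
          simp [Fin.succ_zero_eq_one]
        have htail2 : (fun i : Fin (k+1) => (w ∘ ⇑(Equiv.swap (0 : Fin (k+2)) 1)) i.succ)
            = Fin.cons (w 0) (fun i : Fin k => w i.succ.succ) := by
          funext i
          refine Fin.cases ?_ (fun j => ?_) i
          · simp [Fin.succ_zero_eq_one]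
          · simp [hswap01 j]
        have e2 : List.ofFn (w ∘ Equiv.swap 0 1)
            = w 1 :: w 0 :: List.ofFn (fun i : Fin k => w i.succ.succ) := by
          rw [List.ofFn_succ, htail2, List.ofFn_succ]
          simp
        rw [e1, e2, List.prod_cons, List.prod_cons, List.prod_cons, List.prod_cons,
          ← mul_assoc, ← mul_assoc, hw 1 0 h10, neg_mul]
      -- swap of two nonzero indices
      have nz : ∀ (w : Fin (k+2) → M), AC w → ∀ x' y' : Fin (k+1), x' ≠ y' →
          (List.ofFn (w ∘ Equiv.swap x'.succ y'.succ)).prod = -(List.ofFn w).prod := by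
        intro w hw x' y' h
        have hhead : (w ∘ ⇑(Equiv.swap x'.succ y'.succ)) 0 = w 0 :=
          congrArg w (Equiv.swap_apply_of_ne_of_ne
            (Fin.succ_ne_zero x').symm (Fin.succ_ne_zero y').symm)
        have htail : (fun i : Fin (k+1) => (w ∘ ⇑(Equiv.swap x'.succ y'.succ)) i.succ)
            = ((w ∘ Fin.succ) ∘ ⇑(Equiv.swap x' y')) := by
          funext i
          show w (Equiv.swap x'.succ y'.succ i.succ) = w (Fin.succ (Equiv.swap x' y' i))
          rw [(Fin.succ_injective _).swap_apply]
        have e1 : List.ofFn (w ∘ Equiv.swap x'.succ y'.succ)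
            = w 0 :: List.ofFn ((w ∘ Fin.succ) ∘ Equiv.swap x' y') := by
          rw [List.ofFn_succ, hhead, htail]
        have e0 : List.ofFn w = w 0 :: List.ofFn (w ∘ Fin.succ) := List.ofFn_succ (f := w)
        rw [e1, e0, List.prod_cons, List.prod_cons, ih (w ∘ Fin.succ) hw.succ x' y' h, mul_neg]
      -- swap 0 y with y ≠ 0, 1
      have z0 : ∀ (w : Fin (k+2) → M), AC w → ∀ y : Fin (k+2), y ≠ 0 → y ≠ 1 →
          (List.ofFn (w ∘ Equiv.swap 0 y)).prod = -(List.ofFn w).prod := by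
        intro w hw y hy0 hy1
        have hkey : Equiv.swap (0 : Fin (k+2)) y
            = Equiv.swap 0 1 * Equiv.swap 1 y * Equiv.swap 0 1 := by
          have h := Equiv.swap_apply_apply (Equiv.swap (0 : Fin (k+2)) 1) 1 y
          rw [Equiv.swap_apply_right, Equiv.swap_apply_of_ne_of_ne hy0 hy1,
            Equiv.swap_inv] at h
          exact h
        have hcomp : w ∘ ⇑(Equiv.swap (0 : Fin (k+2)) y)
            = ((w ∘ Equiv.swap 0 1) ∘ Equiv.swap 1 y) ∘ Equiv.swap 0 1 := by
          rw [hkey]; rfl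
        obtain ⟨y', rfl⟩ : ∃ y', Fin.succ y' = y := Fin.exists_succ_eq.2 hy0
        have hy'0 : (0 : Fin (k+1)) ≠ y' := by
          intro h; rw [← h, Fin.succ_zero_eq_one] at hy1; exact hy1 rfl
        have h1y : Equiv.swap (1 : Fin (k+2)) y'.succ
            = Equiv.swap (0 : Fin (k+1)).succ y'.succ := by
          rw [Fin.succ_zero_eq_one]
        rw [hcomp, adj _ ((hw.comp _).comp _), h1y,
          nz (w ∘ Equiv.swap 0 1) (hw.comp _) 0 y' hy'0, adj w hw]
        simp
      intro v hv x y hxy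
      rcases Fin.eq_zero_or_eq_succ x with hx | ⟨x', rfl⟩
      · subst hx
        rcases eq_or_ne y 1 with hy1 | hy1
        · subst hy1; exact adj v hv
        · exact z0 v hv y (Ne.symm hxy) hy1
      · rcases Fin.eq_zero_or_eq_succ y with hy | ⟨y', rfl⟩
        · subst hy
          rw [Equiv.swap_comm]
          rcases eq_or_ne x'.succ 1 with hx1 | hx1
          · rw [hx1]; exact adj v hv
          · exact z0 v hv x'.succ hxy hx1
        · exact nz v hv x' y' (fun h => hxy (by rw [h]))

lemma prod_ofFn_comp_perm {n : ℕ} (e : Equiv.Perm (Fin n)) :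
    ∀ (v : Fin n → M), AC v →
      (List.ofFn (v ∘ e)).prod = ((Equiv.Perm.sign e : ℤ)) • (List.ofFn v).prod := by
  refine Equiv.Perm.swap_induction_on e ?_ ?_
  · intro v hv
    simp
  · intro f x y hxy ih v hv
    have hcomp : v ∘ ⇑(Equiv.swap x y * f) = (v ∘ ⇑(Equiv.swap x y)) ∘ ⇑f := rfl
    rw [hcomp, ih (v ∘ ⇑(Equiv.swap x y)) (hv.comp _),
      prod_ofFn_comp_swap _ v hv x y hxy, Equiv.Perm.sign_mul, Equiv.Perm.sign_swap hxy]
    simp [Units.val_mul, smul_neg, neg_smul]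

end Anticommuting

/-- The wedge product `α₁ ∧ … ∧ α_k` of matrix-valued 1-forms, given by its coefficient
tensor: `(α₁∧…∧α_k)(e_{t 1},…,e_{t k}) = Σ_{π} sgn(π) α₁(e_{t(π 1)})·…·α_k(e_{t(π k)})`. -/
noncomputable def oneFormWedge {r' n : ℕ} (k : ℕ)
    (α : Fin k → (Fin n → Matrix (Fin r') (Fin r') ℂ)) :
    (Fin k → Fin n) → Matrix (Fin r') (Fin r') ℂ :=
  fun t => ∑ π : Equiv.Perm (Fin k),
    ((Equiv.Perm.sign π : ℤ) : ℂ) • (List.ofFn fun j => α j (t (π j))).prod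

/-- coefficient tensor of the volume form `dx¹∧…∧dx^d` -/
noncomputable def stdVolCoeff (d : ℕ) (t : Fin d → Fin d) : ℂ :=
  (Matrix.of fun a b : Fin d => if t a = b then (1 : ℂ) else 0).det

/-- For Clifford matrices `σ^j`, smooth `F` and `dω = iΣ_jσ^j dF_j`,
`tr(dω^{∧d}) = i^d d! κ_σ det(DF) dx¹∧…∧dx^d`, where `κ_σ = tr(σ¹·…·σ^d)`. -/
theorem stmt12 (d r' : ℕ)
    (σ : Fin d → Matrix (Fin r') (Fin r') ℂ)
    (hσ : ∀ k l, σ k * σ l + σ l * σ k =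
      if k = l then (-2 : ℂ) • (1 : Matrix (Fin r') (Fin r') ℂ) else 0)
    (F : EuclideanSpace ℝ (Fin d) → EuclideanSpace ℝ (Fin d))
    (hF : ContDiff ℝ (⊤ : ℕ∞) F)
    (x : EuclideanSpace ℝ (Fin d))
    (dω : Fin d → Matrix (Fin r') (Fin r') ℂ)
    (hdω : ∀ i, dω i = Complex.I • ∑ j, ((fderiv ℝ F x (EuclideanSpace.single i 1) j : ℝ) : ℂ) • σ j) :
    ∀ t : Fin d → Fin d,
      (oneFormWedge d (fun _ => dω) t).trace
        = Complex.I ^ d * (d.factorial : ℂ) * ((List.ofFn fun j => σ j).prod).trace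
            * (((Matrix.of fun i j => fderiv ℝ F x (EuclideanSpace.single i 1) j).det : ℝ) : ℂ)
            * stdVolCoeff d t := by
  classical
  intro t
  set a : Fin d → Fin d → ℂ :=
    fun i j => ((fderiv ℝ F x (EuclideanSpace.single i 1) j : ℝ) : ℂ) with ha
  have hac : AC σ := by
    intro k l hkl
    have h := hσ k l
    rw [if_neg hkl] at h
    exact eq_neg_of_add_eq_zero_left h
  have hdω' : ∀ i, dω i = ∑ m, (Complex.I * a i m) • σ m := by
    intro i
    rw [hdω i, Finset.smul_sum]
    refine Finset.sum_congr rfl fun m _ => ?_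
    rw [smul_smul]
  have hprod : ∀ w : Fin d → Fin d,
      (List.ofFn fun j => dω (w j)).prod
        = ∑ g : Fin d → Fin d,
            (∏ j, (Complex.I * a (w j) (g j))) • (List.ofFn fun j => σ (g j)).prod := by
    intro w
    have h1 : (List.ofFn fun j => dω (w j)).prod
        = MultilinearMap.mkPiAlgebraFin ℂ d (Matrix (Fin r') (Fin r') ℂ)
            (fun j => dω (w j)) := by
      rw [MultilinearMap.mkPiAlgebraFin_apply]
    rw [h1]
    have h2 : (fun j => dω (w j)) = fun j => ∑ m, (Complex.I * a (w j) m) • σ m := by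
      funext j; exact hdω' (w j)
    rw [h2, MultilinearMap.map_sum]
    refine Finset.sum_congr rfl fun g _ => ?_
    rw [MultilinearMap.map_smul_univ, MultilinearMap.mkPiAlgebraFin_apply]
  set B : Matrix (Fin d) (Fin d) ℂ := Matrix.of fun p q => a (t p) q with hB
  set κ : ℂ := ((List.ofFn fun j => σ j).prod).trace with hκ
  have LHS1 : (oneFormWedge d (fun _ => dω) t).trace
      = ∑ π : Equiv.Perm (Fin d), ∑ g : Fin d → Fin d,
          ((Equiv.Perm.sign π : ℤ) : ℂ) * ((∏ j, (Complex.I * a (t (π j)) (g j)))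
            * ((List.ofFn fun j => σ (g j)).prod).trace) := by
    rw [oneFormWedge, Matrix.trace_sum]
    refine Finset.sum_congr rfl fun π _ => ?_
    rw [Matrix.trace_smul, hprod (fun j => t (π j)), Matrix.trace_sum, Finset.smul_sum]
    refine Finset.sum_congr rfl fun g _ => ?_
    rw [Matrix.trace_smul, smul_eq_mul, smul_eq_mul]
  have LHS2 : (oneFormWedge d (fun _ => dω) t).trace
      = ∑ g : Fin d → Fin d, (B.submatrix id g).det
          * (Complex.I ^ d * ((List.ofFn fun j => σ (g j)).prod).trace) := by
    rw [LHS1, Finset.sum_comm]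
    refine Finset.sum_congr rfl fun g _ => ?_
    have hdet : (B.submatrix id g).det
        = ∑ π : Equiv.Perm (Fin d), ((Equiv.Perm.sign π : ℤ) : ℂ)
            * ∏ j, a (t (π j)) (g j) := by
      rw [Matrix.det_apply]
      refine Finset.sum_congr rfl fun π _ => ?_
      simp [Units.smul_def, zsmul_eq_mul, Matrix.submatrix_apply, hB]
    rw [hdet, Finset.sum_mul]
    refine Finset.sum_congr rfl fun π _ => ?_
    have hI : (∏ j, (Complex.I * a (t (π j)) (g j)))
        = Complex.I ^ d * ∏ j, a (t (π j)) (g j) := by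
      rw [Finset.prod_mul_distrib, Finset.prod_const, Finset.card_univ, Fintype.card_fin]
    rw [hI]; ring
  have hvanish : ∀ g : Fin d → Fin d, ¬Function.Injective g →
      (B.submatrix id g).det = 0 := by
    intro g hg
    rw [Function.not_injective_iff] at hg
    obtain ⟨p, q, hpq, hne⟩ := hg
    exact Matrix.det_zero_of_column_eq hne (fun i => by simp [Matrix.submatrix_apply, hpq])
  set f : (Fin d → Fin d) → ℂ := fun g => (B.submatrix id g).det
      * (Complex.I ^ d * ((List.ofFn fun j => σ (g j)).prod).trace) with hf
  have hperm : ∑ g : Fin d → Fin d, f g = ∑ e : Equiv.Perm (Fin d), f ⇑e := by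
    have himg : ∑ e : Equiv.Perm (Fin d), f ⇑e
        = ∑ g ∈ Finset.univ.image (fun e : Equiv.Perm (Fin d) => ⇑e), f g :=
      (Finset.sum_image (fun e _ e' _ h => Equiv.coe_fn_injective h)).symm
    rw [himg]
    refine (Finset.sum_subset (Finset.subset_univ _) fun g _ hg => ?_).symm
    have hni : ¬Function.Injective g := by
      intro hinj
      have hb : Function.Bijective g := Finite.injective_iff_bijective.1 hinj
      exact hg (Finset.mem_image.2 ⟨Equiv.ofBijective g hb, Finset.mem_univ _, rfl⟩)
    rw [hf]
    simp only [hvanish g hni, zero_mul]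
  have hTe : ∀ e : Equiv.Perm (Fin d),
      ((List.ofFn fun j => σ (e j)).prod).trace = ((Equiv.Perm.sign e : ℤ) : ℂ) * κ := by
    intro e
    have h := prod_ofFn_comp_perm e σ hac
    have h2 : (List.ofFn fun j => σ (e j)) = List.ofFn (σ ∘ ⇑e) := rfl
    rw [h2, h, Matrix.trace_smul, hκ]
    simp [zsmul_eq_mul]
  have hDe : ∀ e : Equiv.Perm (Fin d),
      (B.submatrix id ⇑e).det = ((Equiv.Perm.sign e : ℤ) : ℂ) * B.det := by
    intro e
    rw [Matrix.det_permute' e B]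
  have hs : ∀ e : Equiv.Perm (Fin d),
      ((Equiv.Perm.sign e : ℤ) : ℂ) * ((Equiv.Perm.sign e : ℤ) : ℂ) = 1 := by
    intro e
    rw [← Int.cast_mul, ← Units.val_mul, Int.units_mul_self, Units.val_one, Int.cast_one]
  have hsum : ∑ e : Equiv.Perm (Fin d), f ⇑e
      = (d.factorial : ℂ) * (B.det * (Complex.I ^ d * κ)) := by
    have hterm : ∀ e : Equiv.Perm (Fin d), f ⇑e = B.det * (Complex.I ^ d * κ) := by
      intro e
      rw [hf]
      simp only []
      rw [hDe e, hTe e]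
      calc ((Equiv.Perm.sign e : ℤ) : ℂ) * B.det
            * (Complex.I ^ d * (((Equiv.Perm.sign e : ℤ) : ℂ) * κ))
          = (((Equiv.Perm.sign e : ℤ) : ℂ) * ((Equiv.Perm.sign e : ℤ) : ℂ))
              * (B.det * (Complex.I ^ d * κ)) := by ring
        _ = B.det * (Complex.I ^ d * κ) := by rw [hs e, one_mul]
    rw [Finset.sum_congr rfl fun e _ => hterm e, Finset.sum_const, Finset.card_univ,
      Fintype.card_perm, Fintype.card_fin, nsmul_eq_mul]
  have hBdet : B.det = stdVolCoeff d t
      * (((Matrix.of fun i j => fderiv ℝ F x (EuclideanSpace.single i 1) j).det : ℝ) : ℂ) := by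
    have hBmul : B = (Matrix.of fun p q : Fin d => if t p = q then (1 : ℂ) else 0)
        * (Matrix.of fun i j => fderiv ℝ F x (EuclideanSpace.single i 1) j).map
            Complex.ofRealHom := by
      ext p q
      simp [Matrix.mul_apply, hB, ha, Matrix.map_apply, ite_mul, Finset.sum_ite_eq]
    have hmd : ((Matrix.of fun i j => fderiv ℝ F x (EuclideanSpace.single i 1) j).map
          ⇑Complex.ofRealHom).det
        = (((Matrix.of fun i j => fderiv ℝ F x (EuclideanSpace.single i 1) j).det : ℝ) : ℂ) :=
      (RingHom.map_det Complex.ofRealHom _).symm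
    rw [hBmul, Matrix.det_mul, stdVolCoeff, hmd]
  rw [LHS2, hperm, hsum, hBdet]
  ring
end

section
/- Let d ≥ 3 be odd and define I(R) := ∫_0^R ((r + d − 1)/r) (cos(2r) − 1)^{(d−1)/2} dr for R ≥ 0. Then the map ℝ → ℝ given by C ↦ sign(C) · (2^{(d−1)/2}/d!) · I(r_C), where r_C := |C| ∫_0^∞ (1+r²)^{−s/2} dr for fixed s > 1 (and value 0 at C = 0), is surjective onto ℝ. -/
open MeasureTheory

namespace Stmt18Aux

noncomputable def g (d m : ℕ) (r : ℝ) : ℝ :=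
  ((r + d - 1) / r) * (Real.cos (2 * r) - 1) ^ m

lemma cos_bound (r : ℝ) : 1 - Real.cos (2 * r) ≤ 2 * r ^ 2 := by
  have h1 : Real.sin r ^ 2 = 1 / 2 - Real.cos (2 * r) / 2 := Real.sin_sq_eq_half_sub r
  have h2 : |Real.sin r| ≤ |r| := Real.abs_sin_le_abs
  have h3 : Real.sin r ^ 2 ≤ r ^ 2 := by
    rw [← sq_abs (Real.sin r), ← sq_abs r]
    exact pow_le_pow_left₀ (abs_nonneg _) h2 2
  linarith

lemma g_abs_le (d m : ℕ) (hm : 1 ≤ m) (r : ℝ) :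
    |g d m r| ≤ (|r| + d + 1) * 2 ^ m * |r| ^ (2 * m - 1) := by
  rcases eq_or_ne r 0 with rfl | hr
  · simp [g, zero_pow (by omega : m ≠ 0), zero_pow (by omega : 2 * m - 1 ≠ 0)]
  · have hr' : 0 < |r| := abs_pos.mpr hr
    have hb : |Real.cos (2 * r) - 1| ^ m ≤ 2 ^ m * |r| ^ (2 * m) := by
      have h1 : |Real.cos (2 * r) - 1| ≤ 2 * r ^ 2 := by
        rw [abs_sub_comm, abs_of_nonneg (by linarith [Real.cos_le_one (2 * r)])]
        exact cos_bound r
      calc |Real.cos (2 * r) - 1| ^ m ≤ (2 * r ^ 2) ^ m :=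
            pow_le_pow_left₀ (abs_nonneg _) h1 m
        _ = 2 ^ m * |r| ^ (2 * m) := by rw [mul_pow, ← sq_abs r, ← pow_mul]
    have hnum : |r + d - 1| ≤ |r| + d + 1 := by
      have h2 : |(d : ℝ) - 1| ≤ d + 1 := by
        rw [abs_sub_le_iff]
        constructor <;> linarith [Nat.cast_nonneg (α := ℝ) d]
      calc |r + d - 1| = |r + ((d : ℝ) - 1)| := by ring_nf
        _ ≤ |r| + |(d : ℝ) - 1| := abs_add_le _ _
        _ ≤ |r| + d + 1 := by linarith
    have key : |r| ^ (2 * m) = |r| ^ (2 * m - 1) * |r| := by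
      rw [← pow_succ]; congr 1; omega
    have : |g d m r| = |r + d - 1| / |r| * |Real.cos (2 * r) - 1| ^ m := by
      rw [g, abs_mul, abs_div, abs_pow]
    rw [this, div_mul_eq_mul_div, div_le_iff₀ hr']
    calc |r + d - 1| * |Real.cos (2 * r) - 1| ^ m
        ≤ (|r| + d + 1) * (2 ^ m * |r| ^ (2 * m)) :=
          mul_le_mul hnum hb (pow_nonneg (abs_nonneg _) _)
            (by positivity)
      _ = (|r| + d + 1) * 2 ^ m * |r| ^ (2 * m - 1) * |r| := by rw [key]; ring

lemma g_intervalIntegrable (d m : ℕ) (hm : 1 ≤ m) (a b : ℝ) :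
    IntervalIntegrable (g d m) volume a b := by
  have hcont : Continuous fun r : ℝ => (|r| + d + 1) * 2 ^ m * |r| ^ (2 * m - 1) := by
    continuity
  have hmeas : Measurable (g d m) := by
    unfold g
    fun_prop
  refine (hcont.intervalIntegrable a b).mono_fun'
    (hmeas.aestronglyMeasurable.restrict) ?_
  filter_upwards with r
  simpa [Real.norm_eq_abs] using g_abs_le d m hm r

lemma g_flip (d m : ℕ) (r : ℝ) :
    (-1 : ℝ) ^ m * g d m r = ((r + d - 1) / r) * (1 - Real.cos (2 * r)) ^ m := by
  have h : (1 - Real.cos (2 * r)) = (-1) * (Real.cos (2 * r) - 1) := by ring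
  rw [h, mul_pow, g]; ring

lemma g_nonneg (d m : ℕ) (hd3 : 3 ≤ d) {r : ℝ} (hr : 0 ≤ r) :
    0 ≤ (-1 : ℝ) ^ m * g d m r := by
  rw [g_flip]
  have hd : (3 : ℝ) ≤ d := by exact_mod_cast hd3
  refine mul_nonneg (div_nonneg (by linarith) hr) (pow_nonneg ?_ _)
  linarith [Real.cos_le_one (2 * r)]

open Real in
lemma g_one_le (d m : ℕ) (hd3 : 3 ≤ d) (k : ℕ) {r : ℝ}
    (hr : r ∈ Set.Icc (π / 4 + k * π) (3 * π / 4 + k * π)) :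
    1 ≤ (-1 : ℝ) ^ m * g d m r := by
  obtain ⟨hr1, hr2⟩ := hr
  have hπ := Real.pi_pos
  have hk : (0 : ℝ) ≤ k * π := by positivity
  have hrpos : 0 < r := by nlinarith
  have hcos : Real.cos (2 * r) ≤ 0 := by
    have heq : Real.cos (2 * r) = Real.cos (2 * r - k * (2 * π)) := by
      have := Real.cos_add_int_mul_two_pi (2 * r - k * (2 * π)) k
      push_cast at this
      rw [← this]; ring_nf
    rw [heq]
    apply Real.cos_nonpos_of_pi_div_two_le_of_le <;> nlinarith
  rw [g_flip]
  have hd : (3 : ℝ) ≤ d := by exact_mod_cast hd3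
  have h1 : 1 ≤ (r + d - 1) / r := by
    rw [le_div_iff₀ hrpos]; linarith
  have h2 : (1 : ℝ) ≤ (1 - Real.cos (2 * r)) ^ m :=
    one_le_pow₀ (by linarith)
  nlinarith

open Real in
lemma increment (d m : ℕ) (hd3 : 3 ≤ d) (hm : 1 ≤ m) (k : ℕ) :
    π / 2 ≤ ∫ r in (π / 4 + k * π)..(3 * π / 4 + k * π), (-1 : ℝ) ^ m * g d m r := by
  have hπ := Real.pi_pos
  have hab : (π / 4 + k * π) ≤ (3 * π / 4 + k * π) := by linarith
  have h1 : ∫ r in (π / 4 + k * π)..(3 * π / 4 + k * π), (1 : ℝ) = π / 2 := by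
    simp [hab]; ring
  rw [← h1]
  apply intervalIntegral.integral_mono_on hab
    (intervalIntegrable_const)
    ((g_intervalIntegrable d m hm _ _).const_mul _)
  exact fun x hx => g_one_le d m hd3 k hx

noncomputable def F (d m : ℕ) (R : ℝ) : ℝ := ∫ r in (0:ℝ)..R, g d m r

noncomputable def J (d m : ℕ) (R : ℝ) : ℝ := (-1 : ℝ) ^ m * F d m R

lemma J_cont (d m : ℕ) (hm : 1 ≤ m) : Continuous (J d m) :=
  continuous_const.mul (intervalIntegral.continuous_primitive (g_intervalIntegrable d m hm) 0)

lemma J_zero (d m : ℕ) : J d m 0 = 0 := by simp [J, F]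

lemma J_step (d m : ℕ) (hm : 1 ≤ m) (a b : ℝ) :
    J d m b = J d m a + ∫ r in a..b, (-1 : ℝ) ^ m * g d m r := by
  rw [intervalIntegral.integral_const_mul, J, J, F, F, ← mul_add,
    intervalIntegral.integral_add_adjacent_intervals
      (g_intervalIntegrable d m hm 0 a) (g_intervalIntegrable d m hm a b)]

lemma J_mono (d m : ℕ) (hd3 : 3 ≤ d) (hm : 1 ≤ m) {a b : ℝ} (ha : 0 ≤ a) (hab : a ≤ b) :
    J d m a ≤ J d m b := by
  rw [J_step d m hm a b]
  have : 0 ≤ ∫ r in a..b, (-1 : ℝ) ^ m * g d m r :=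
    intervalIntegral.integral_nonneg hab fun u hu => g_nonneg d m hd3 (ha.trans hu.1)
  linarith

open Real in
lemma J_ge (d m : ℕ) (hd3 : 3 ≤ d) (hm : 1 ≤ m) (k : ℕ) :
    J d m (π / 4 + k * π) + π / 2 ≤ J d m (3 * π / 4 + k * π) := by
  rw [J_step d m hm (π / 4 + k * π) (3 * π / 4 + k * π)]
  linarith [increment d m hd3 hm k]

open Real in
lemma J_grow (d m : ℕ) (hd3 : 3 ≤ d) (hm : 1 ≤ m) (n : ℕ) :
    ((n : ℝ) + 1) * (π / 2) ≤ J d m (3 * π / 4 + n * π) := by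
  have hπ := Real.pi_pos
  induction n with
  | zero =>
    have h1 := J_ge d m hd3 hm 0
    have h3 : J d m 0 ≤ J d m (π / 4 + (0:ℕ) * π) :=
      J_mono d m hd3 hm le_rfl (by push_cast; linarith)
    rw [J_zero] at h3
    push_cast at h1 h3 ⊢
    linarith
  | succ n ih =>
    have h1 := J_ge d m hd3 hm (n + 1)
    have h3 : J d m (3 * π / 4 + n * π) ≤ J d m (π / 4 + ((n + 1 : ℕ)) * π) :=
      J_mono d m hd3 hm (by positivity) (by push_cast; linarith)
    push_cast at h1 h3 ih ⊢
    linarith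

lemma A_integrable (s : ℝ) (hs : 1 < s) :
    IntegrableOn (fun u : ℝ => (1 + u ^ 2) ^ (-s / 2)) (Set.Ioi 0) := by
  have h : Integrable (fun x : ℝ => ((1 : ℝ) + ‖x‖ ^ 2) ^ (-s / 2)) :=
    integrable_rpow_neg_one_add_norm_sq (by simpa using hs)
  simpa [Real.norm_eq_abs, sq_abs] using h.integrableOn

lemma A_pos (s : ℝ) (hs : 1 < s) :
    0 < ∫ u in Set.Ioi (0:ℝ), (1 + u ^ 2) ^ (-s / 2) := by
  rw [setIntegral_pos_iff_support_of_nonneg_ae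
    (Filter.Eventually.of_forall fun u => Real.rpow_nonneg (by positivity) _)
    (A_integrable s hs)]
  have hsupp : Function.support (fun u : ℝ => (1 + u ^ 2) ^ (-s / 2)) = Set.univ := by
    ext u
    simp only [Function.mem_support, Set.mem_univ, iff_true]
    exact ne_of_gt (Real.rpow_pos_of_pos (by positivity) _)
  rw [hsupp, Set.univ_inter, Real.volume_Ioi]
  exact ENNReal.zero_lt_top

end Stmt18Aux

open Real

/-- For `d ≥ 3` odd and `I(R) = ∫_0^R ((r+d−1)/r)(cos(2r)−1)^{(d−1)/2} dr`,
the map `C ↦ sign(C) · (2^{(d−1)/2}/d!) · I(r_C)` with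
`r_C = |C| ∫_0^∞ (1+r²)^{−s/2} dr` is surjective onto `ℝ`. -/
theorem stmt18 (d : ℕ) (hd : Odd d) (hd3 : 3 ≤ d) (s : ℝ) (hs : 1 < s) :
    Function.Surjective (fun C : ℝ =>
      Real.sign C * ((2 : ℝ) ^ ((d - 1) / 2) / (d.factorial : ℝ)) *
        ∫ r in (0:ℝ)..(|C| * ∫ u in Set.Ioi (0:ℝ), (1 + u ^ 2) ^ (-s / 2)),
          ((r + d - 1) / r) * (Real.cos (2 * r) - 1) ^ ((d - 1) / 2)) := by
  intro t
  have hπ := Real.pi_pos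
  set m := (d - 1) / 2 with hmdef
  have hm : 1 ≤ m := by omega
  have hA : 0 < ∫ u in Set.Ioi (0:ℝ), (1 + u ^ 2) ^ (-s / 2) := Stmt18Aux.A_pos s hs
  set A := ∫ u in Set.Ioi (0:ℝ), (1 + u ^ 2) ^ (-s / 2) with hAdef
  by_cases ht : t = 0
  · exact ⟨0, by simp [ht, Real.sign_zero]⟩
  set K := (2:ℝ) ^ m / (d.factorial : ℝ) with hKdef
  have hK0 : 0 < K := by positivity
  set y := |t| / K with hydef
  have hy : 0 < y := div_pos (abs_pos.mpr ht) hK0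
  obtain ⟨n, hn⟩ := exists_nat_ge (y / (π / 2))
  have hyn : y ≤ ((n:ℝ) + 1) * (π / 2) := by
    rw [div_le_iff₀ (by linarith : (0:ℝ) < π / 2)] at hn
    nlinarith
  have hRn : y ≤ Stmt18Aux.J d m (3 * π / 4 + n * π) :=
    hyn.trans (Stmt18Aux.J_grow d m hd3 hm n)
  have h0Rn : (0:ℝ) ≤ 3 * π / 4 + n * π := by positivity
  obtain ⟨R₀, hR₀mem, hR₀⟩ := intermediate_value_Icc h0Rn
    ((Stmt18Aux.J_cont d m hm).continuousOn)
    ⟨by rw [Stmt18Aux.J_zero]; exact hy.le, hRn⟩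
  have hR₀pos : 0 < R₀ := by
    rcases hR₀mem.1.eq_or_lt with h | h
    · exfalso; rw [← h, Stmt18Aux.J_zero] at hR₀; linarith
    · exact h
  set ε := (-1:ℝ) ^ m * Real.sign t with hεdef
  have hε : ε = 1 ∨ ε = -1 := by
    rcases Real.sign_apply_eq_of_ne_zero t ht with h | h <;>
    rcases Nat.even_or_odd m with hp | hp <;>
      simp [hεdef, h, hp.neg_one_pow]
  have hRA : 0 < R₀ / A := div_pos hR₀pos hA
  refine ⟨ε * (R₀ / A), ?_⟩
  have habs : |ε * (R₀ / A)| = R₀ / A := by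
    rcases hε with h | h <;> rw [h] <;>
      simp [abs_of_pos hRA]
  have hsign : Real.sign (ε * (R₀ / A)) = ε := by
    rcases hε with h | h <;> rw [h]
    · rw [one_mul, Real.sign_of_pos hRA]
    · rw [neg_one_mul, Real.sign_of_neg (neg_lt_zero.mpr hRA)]
  have h2 : ((-1:ℝ)^m) * ((-1:ℝ)^m) = 1 := by
    rw [← pow_add, ← two_mul, pow_mul]; norm_num
  show Real.sign (ε * (R₀ / A)) * K * Stmt18Aux.F d m (|ε * (R₀ / A)| * A) = t
  rw [hsign, habs, div_mul_cancel₀ _ (ne_of_gt hA)]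
  have hFy : Stmt18Aux.F d m R₀ = (-1:ℝ)^m * y := by
    calc Stmt18Aux.F d m R₀
        = ((-1:ℝ)^m * (-1:ℝ)^m) * Stmt18Aux.F d m R₀ := by rw [h2, one_mul]
      _ = (-1:ℝ)^m * Stmt18Aux.J d m R₀ := by rw [Stmt18Aux.J]; ring
      _ = (-1:ℝ)^m * y := by rw [hR₀]
  have hKy : K * y = |t| := by rw [hydef]; field_simp
  have hst : Real.sign t * |t| = t := by
    rcases lt_or_gt_of_ne ht with h | h
    · rw [Real.sign_of_neg h, abs_of_neg h]; ring
    · rw [Real.sign_of_pos h, abs_of_pos h]; ring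
  rw [hFy, hεdef]
  calc (-1:ℝ)^m * Real.sign t * K * ((-1:ℝ)^m * y)
      = ((-1:ℝ)^m * (-1:ℝ)^m) * (Real.sign t * (K * y)) := by ring
    _ = Real.sign t * |t| := by rw [h2, one_mul, hKy]
    _ = t := hst
end
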